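/- arXiv:1504.06132 — 2 statements merged into one kernel-verified Lean document; each statement's English description precedes it below -/
import Mathlib

section
/- Let g : ℝ → ℝ be bounded continuous with finite limits g(±∞), G(s) = ∫₀ˢ g. Let Ω be a bounded domain, φ₀ ∈ L²(Ω), and (uₙ) ⊂ L²(Ω) with ‖uₙ‖₂ → ∞ and uₙ/‖uₙ‖₂ → φ₀ in L²(Ω). Let f̄ ∈ L²(Ω). Then (1/‖uₙ‖₂)·(∫_Ω G(uₙ) dx − ∫_Ω f̄·uₙ dx) → ∫_Ω (g(+∞) − f̄)·φ₀⁺ dx − ∫_Ω (g(−∞) − f̄)·φ₀⁻ dx, where φ₀⁺, φ₀⁻ denote the positive and negative parts of φ₀. -/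
/-!
Since `g → g(±∞)`, the primitive satisfies `G(s)/s → g(±∞)` as `s → ±∞`, hence
`G(T s)/T → g(+∞) s⁺ − g(−∞) s⁻` for every `s` as `T → ∞`; as `|G(T s)|/T ≤ M |s|`, dominated
convergence gives `∫ G(T φ₀)/T → ∫ (g(+∞) φ₀⁺ − g(−∞) φ₀⁻)`. Since `G` is `M`-Lipschitz with
`G(0) = 0`, replacing `uₙ` by `‖uₙ‖ φ₀` changes `∫ G(uₙ)/‖uₙ‖` by at most
`M ‖uₙ/‖uₙ‖ − φ₀‖₁ → 0`, while `∫ f̄ uₙ/‖uₙ‖ → ∫ f̄ φ₀` by Cauchy–Schwarz. Splitting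
`φ₀ = φ₀⁺ − φ₀⁻` in the last integral combines the two limits.
-/

open Real Filter MeasureTheory
open scoped NNReal Topology

section Primitive

open intervalIntegral

theorem isLittleO_intervalIntegral_atTop {h : ℝ → ℝ} (hh : Continuous h)
    (h0 : Tendsto h atTop (𝓝 0)) :
    (fun s => ∫ τ in (0 : ℝ)..s, h τ) =o[atTop] id := by
  refine Asymptotics.isLittleO_iff.2 fun c hc => ?_
  obtain ⟨A, hA⟩ := eventually_atTop.1 <|
    (tendsto_zero_iff_norm_tendsto_zero.1 h0).eventually (eventually_le_nhds (half_pos hc))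
  set A' := max A 0
  set K := ‖∫ τ in (0 : ℝ)..A', h τ‖
  filter_upwards [eventually_ge_atTop A', eventually_ge_atTop (2 * K / c)] with s hsA hsK
  have hs0 : 0 ≤ s := (le_max_right A 0).trans hsA
  have htail : ‖∫ τ in A'..s, h τ‖ ≤ c / 2 * |s - A'| :=
    norm_integral_le_of_norm_le_const fun x hx =>
      hA x ((le_max_left A 0).trans (Set.uIoc_of_le hsA ▸ hx).1.le)
  have hK : 2 * K ≤ c * s := by rw [div_le_iff₀ hc] at hsK; linarith
  rw [← integral_add_adjacent_intervals (hh.intervalIntegrable 0 A') (hh.intervalIntegrable A' s),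
    id, Real.norm_of_nonneg hs0]
  calc _ ≤ K + c / 2 * |s - A'| := (norm_add_le _ _).trans (by gcongr)
    _ ≤ c * s := by rw [abs_of_nonneg (sub_nonneg.2 hsA)]; nlinarith [le_max_right A 0]

theorem tendsto_intervalIntegral_div_atTop {g : ℝ → ℝ} (hg : Continuous g) {L : ℝ}
    (hgL : Tendsto g atTop (𝓝 L)) :
    Tendsto (fun s => (∫ τ in (0 : ℝ)..s, g τ) / s) atTop (𝓝 L) := by
  have hsub := (isLittleO_intervalIntegral_atTop (h := fun τ => g τ - L)
    (hg.sub continuous_const) (by simpa using hgL.sub_const L)).tendsto_div_nhds_zero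
  refine (by simpa using hsub.add_const L : Tendsto _ atTop (𝓝 L)).congr' ?_
  filter_upwards [eventually_ne_atTop 0] with s hs
  rw [integral_sub (hg.intervalIntegrable _ _) intervalIntegrable_const,
    intervalIntegral.integral_const, smul_eq_mul, sub_zero, sub_div, mul_div_cancel_left₀ _ hs,
    sub_add_cancel]

theorem tendsto_intervalIntegral_div_atBot {g : ℝ → ℝ} (hg : Continuous g) {L : ℝ}
    (hgL : Tendsto g atBot (𝓝 L)) :
    Tendsto (fun s => (∫ τ in (0 : ℝ)..s, g τ) / s) atBot (𝓝 L) := by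
  have := (tendsto_intervalIntegral_div_atTop (hg.comp continuous_neg)
    (hgL.comp tendsto_neg_atTop_atBot)).comp tendsto_neg_atBot_atTop
  refine this.congr fun s => ?_
  simp [integral_comp_neg, integral_symm s 0, div_neg, neg_div]

theorem tendsto_intervalIntegral_mul_div_atTop {g : ℝ → ℝ} (hg : Continuous g) {gp gm : ℝ}
    (hgp : Tendsto g atTop (𝓝 gp)) (hgm : Tendsto g atBot (𝓝 gm)) (s : ℝ) :
    Tendsto (fun T => (∫ τ in (0 : ℝ)..T * s, g τ) / T) atTop
      (𝓝 (gp * max s 0 - gm * max (-s) 0)) := by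
  have scale : ∀ {l : Filter ℝ} {L : ℝ}, s ≠ 0 → Tendsto (fun T => T * s) atTop l →
      Tendsto (fun x => (∫ τ in (0 : ℝ)..x, g τ) / x) l (𝓝 L) →
      Tendsto (fun T => (∫ τ in (0 : ℝ)..T * s, g τ) / T) atTop (𝓝 (s * L)) := by
    intro l L hs hl hL
    refine ((hL.comp hl).const_mul s).congr' ?_
    filter_upwards [eventually_ne_atTop 0] with T hT
    simp only [Function.comp_apply]
    field_simp
  rcases lt_trichotomy s 0 with hs | rfl | hs
  · convert scale hs.ne (tendsto_id.atTop_mul_const_of_neg hs)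
      (tendsto_intervalIntegral_div_atBot hg hgm) using 2
    rw [max_eq_right hs.le, max_eq_left (neg_nonneg.2 hs.le)]; ring
  · simp
  · convert scale hs.ne' (tendsto_id.atTop_mul_const hs)
      (tendsto_intervalIntegral_div_atTop hg hgp) using 2
    rw [max_eq_left hs.le, max_eq_right (neg_nonpos.2 hs.le)]; ring

theorem lipschitzWith_intervalIntegral {g : ℝ → ℝ} (hg : Continuous g) {K : ℝ≥0}
    (hgK : ∀ s, |g s| ≤ K) : LipschitzWith K fun s => ∫ τ in (0 : ℝ)..s, g τ := by
  refine LipschitzWith.of_dist_le_mul fun a b => ?_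
  rw [dist_eq, dist_eq, integral_interval_sub_left (hg.intervalIntegrable _ _)
    (hg.intervalIntegrable _ _)]
  simpa only [Real.norm_eq_abs] using
    norm_integral_le_of_norm_le_const (a := b) (b := a) (f := g) fun x _ =>
      (Real.norm_eq_abs _).trans_le (hgK x)

end Primitive

section Integral

variable {α ι : Type*} [MeasurableSpace α] {μ : Measure α} {l : Filter ι}

theorem abs_integral_mul_le_eLpNorm_mul_eLpNorm {f w : α → ℝ} (hf : MemLp f 2 μ)
    (hw : MemLp w 2 μ) :
    |∫ x, f x * w x ∂μ| ≤ (eLpNorm f 2 μ).toReal * (eLpNorm w 2 μ).toReal := by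
  have hfw : Integrable (fun x => f x * w x) μ := hf.integrable_mul hw
  have hholder : eLpNorm (f * w) 1 μ ≤ eLpNorm f 2 μ * eLpNorm w 2 μ := by
    simpa using eLpNorm_smul_le_mul_eLpNorm (p := 2) (q := 2) (r := 1) hw.1 hf.1
  calc |∫ x, f x * w x ∂μ| ≤ ∫ x, ‖f x * w x‖ ∂μ :=
      (Real.norm_eq_abs _).symm.trans_le (MeasureTheory.norm_integral_le_integral_norm _)
    _ = (eLpNorm (fun x => f x * w x) 1 μ).toReal := by
      rw [integral_norm_eq_lintegral_enorm hfw.1, eLpNorm_one_eq_lintegral_enorm]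
    _ ≤ (eLpNorm f 2 μ * eLpNorm w 2 μ).toReal :=
      ENNReal.toReal_mono (ENNReal.mul_ne_top hf.eLpNorm_ne_top hw.eLpNorm_ne_top) hholder
    _ = _ := ENNReal.toReal_mul ..

theorem tendsto_integral_mul_of_tendsto_eLpNorm_sub {f φ : α → ℝ} {v : ι → α → ℝ}
    (hf : MemLp f 2 μ) (hv : ∀ j, MemLp (v j) 2 μ) (hφ : MemLp φ 2 μ)
    (h : Tendsto (fun j => (eLpNorm (fun x => v j x - φ x) 2 μ).toReal) l (𝓝 0)) :
    Tendsto (fun j => ∫ x, f x * v j x ∂μ) l (𝓝 (∫ x, f x * φ x ∂μ)) := by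
  refine tendsto_iff_norm_sub_tendsto_zero.2 <|
    squeeze_zero_norm (fun j => ?_) (by simpa using h.const_mul (eLpNorm f 2 μ).toReal)
  have hfv : Integrable (fun x => f x * v j x) μ := hf.integrable_mul (hv j)
  have hfφ : Integrable (fun x => f x * φ x) μ := hf.integrable_mul hφ
  rw [norm_norm, ← integral_sub hfv hfφ]
  have hvφ : MemLp (fun x => v j x - φ x) 2 μ := (hv j).sub hφ
  simpa only [mul_sub, Real.norm_eq_abs] using abs_integral_mul_le_eLpNorm_mul_eLpNorm hf hvφ

theorem tendsto_integral_abs_of_tendsto_eLpNorm [IsFiniteMeasure μ] {w : ι → α → ℝ}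
    (hw : ∀ j, MemLp (w j) 2 μ) (h : Tendsto (fun j => (eLpNorm (w j) 2 μ).toReal) l (𝓝 0)) :
    Tendsto (fun j => ∫ x, |w j x| ∂μ) l (𝓝 0) := by
  refine squeeze_zero (fun j => integral_nonneg fun x => abs_nonneg _) (fun j => ?_)
    (by simpa using h.const_mul (eLpNorm (fun _ => (1 : ℝ)) 2 μ).toReal)
  calc ∫ x, |w j x| ∂μ ≤ |∫ x, 1 * |w j x| ∂μ| := by simpa using le_abs_self _
    _ ≤ _ := abs_integral_mul_le_eLpNorm_mul_eLpNorm (memLp_const 1) (hw j).abs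
    _ = _ := by rw [← eLpNorm_norm (w j)]; rfl

theorem LipschitzWith.integrable_comp_of_map_zero {G : ℝ → ℝ} {K : ℝ≥0} (hG : LipschitzWith K G)
    (hG0 : G 0 = 0) {f : α → ℝ} (hf : Integrable f μ) : Integrable (fun x => G (f x)) μ :=
  memLp_one_iff_integrable.1 (hG.comp_memLp hG0 (memLp_one_iff_integrable.2 hf))

theorem abs_integral_comp_div_sub_le {G : ℝ → ℝ} {K : ℝ≥0} (hG : LipschitzWith K G)
    (hG0 : G 0 = 0) {f φ : α → ℝ} (hf : Integrable f μ) (hφ : Integrable φ μ)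
    {T : ℝ} (hT : 0 < T) :
    |(∫ x, G (f x) ∂μ) / T - ∫ x, G (T * φ x) / T ∂μ| ≤ K * ∫ x, |f x / T - φ x| ∂μ := by
  have hGf := (hG.integrable_comp_of_map_zero hG0 hf).div_const T
  have hGφ := (hG.integrable_comp_of_map_zero hG0 (hφ.const_mul T)).div_const T
  rw [← integral_div, ← integral_sub hGf hGφ, ← integral_const_mul]
  refine (abs_integral_le_integral_abs).trans (integral_mono (hGf.sub hGφ).abs
    ((hf.div_const T |>.sub hφ).abs.const_mul K) fun x => ?_)
  have hdiff : f x - T * φ x = T * (f x / T - φ x) := by field_simp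
  calc |G (f x) / T - G (T * φ x) / T| = |G (f x) - G (T * φ x)| / T := by
        rw [← sub_div, abs_div, abs_of_pos hT]
    _ ≤ K * |f x - T * φ x| / T := by gcongr; exact hG.dist_le_mul _ _
    _ = K * |f x / T - φ x| := by
        rw [hdiff, abs_mul, abs_of_pos hT]; field_simp

theorem tendsto_integral_comp_mul_div {G H : ℝ → ℝ} {K : ℝ≥0} (hG : LipschitzWith K G)
    (hG0 : G 0 = 0) (hGH : ∀ s, Tendsto (fun T => G (T * s) / T) atTop (𝓝 (H s)))
    {φ : α → ℝ} (hφ : Integrable φ μ) :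
    Tendsto (fun T => ∫ x, G (T * φ x) / T ∂μ) atTop (𝓝 (∫ x, H (φ x) ∂μ)) := by
  refine tendsto_integral_filter_of_dominated_convergence (fun x => K * |φ x|)
    (Eventually.of_forall fun T =>
      ((hG.integrable_comp_of_map_zero hG0 (hφ.const_mul T)).div_const T).1)
    ?_ (hφ.abs.const_mul K) (Eventually.of_forall fun x => hGH (φ x))
  filter_upwards [eventually_gt_atTop 0] with T hT
  refine Eventually.of_forall fun x => ?_
  rw [norm_div, Real.norm_of_nonneg hT.le, div_le_iff₀ hT]
  calc ‖G (T * φ x)‖ ≤ K * ‖T * φ x‖ := hG.norm_le_mul hG0 _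
    _ = K * |φ x| * T := by rw [Real.norm_eq_abs, abs_mul, abs_of_pos hT]; ring

theorem tendsto_integral_comp_div {G H : ℝ → ℝ} {K : ℝ≥0} (hG : LipschitzWith K G)
    (hG0 : G 0 = 0) (hGH : ∀ s, Tendsto (fun T => G (T * s) / T) atTop (𝓝 (H s)))
    {u : ι → α → ℝ} {t : ι → ℝ} {φ : α → ℝ} (hu : ∀ j, Integrable (u j) μ)
    (hφ : Integrable φ μ) (ht : Tendsto t l atTop)
    (hconv : Tendsto (fun j => ∫ x, |u j x / t j - φ x| ∂μ) l (𝓝 0)) :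
    Tendsto (fun j => (∫ x, G (u j x) ∂μ) / t j) l (𝓝 (∫ x, H (φ x) ∂μ)) := by
  have hlim := (tendsto_integral_comp_mul_div hG hG0 hGH hφ).comp ht
  have herr : Tendsto (fun j => (∫ x, G (u j x) ∂μ) / t j - ∫ x, G (t j * φ x) / t j ∂μ) l
      (𝓝 0) := by
    refine squeeze_zero_norm' ?_ (by simpa using hconv.const_mul (K : ℝ))
    filter_upwards [ht.eventually_gt_atTop 0] with j hj
    exact abs_integral_comp_div_sub_le hG hG0 (hu j) hφ hj
  simpa using herr.add hlim

theorem integral_sub_mul_max_sub_integral_sub_mul_max [IsFiniteMeasure μ] {f φ : α → ℝ}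
    (hf : MemLp f 2 μ) (hφ : MemLp φ 2 μ) (a b : ℝ) :
    (∫ x, (a - f x) * max (φ x) 0 ∂μ) - ∫ x, (b - f x) * max (-φ x) 0 ∂μ =
      (∫ x, a * max (φ x) 0 - b * max (-φ x) 0 ∂μ) - ∫ x, f x * φ x ∂μ := by
  have haf : MemLp (fun x => a - f x) 2 μ := (memLp_const a).sub hf
  have hbf : MemLp (fun x => b - f x) 2 μ := (memLp_const b).sub hf
  have hpos := hφ.pos_part.integrable one_le_two
  have hneg := hφ.neg_part.integrable one_le_two
  have hafp : Integrable (fun x => (a - f x) * max (φ x) 0) μ := haf.integrable_mul hφ.pos_part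
  have hbfn : Integrable (fun x => (b - f x) * max (-φ x) 0) μ := hbf.integrable_mul hφ.neg_part
  have hfφ : Integrable (fun x => f x * φ x) μ := hf.integrable_mul hφ
  have hpn : Integrable (fun x => a * max (φ x) 0 - b * max (-φ x) 0) μ :=
    (hpos.const_mul a).sub (hneg.const_mul b)
  rw [← integral_sub hafp hbfn, ← integral_sub hpn hfφ]
  refine integral_congr_ae (Eventually.of_forall fun x => ?_)
  linear_combination (-f x) * max_zero_sub_max_neg_zero_eq_self (φ x)

end Integral

theorem stmt_10_general
    {n : ℕ} (Ω : Set (EuclideanSpace ℝ (Fin n)))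
    (hΩb : Bornology.IsBounded Ω)
    (g : ℝ → ℝ) (hgc : Continuous g) (hgb : ∃ M : ℝ, ∀ s : ℝ, |g s| ≤ M)
    (gp gm : ℝ) (hgp : Tendsto g atTop (nhds gp)) (hgm : Tendsto g atBot (nhds gm))
    (G : ℝ → ℝ) (hG : ∀ s : ℝ, G s = ∫ τ in (0 : ℝ)..s, g τ)
    (fbar : EuclideanSpace ℝ (Fin n) → ℝ) (hfbar : MemLp fbar 2 (volume.restrict Ω))
    (φ₀ : EuclideanSpace ℝ (Fin n) → ℝ) (hφ₀ : MemLp φ₀ 2 (volume.restrict Ω))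
    (u : ℕ → EuclideanSpace ℝ (Fin n) → ℝ)
    (hu : ∀ j, MemLp (u j) 2 (volume.restrict Ω))
    (hnorm : Tendsto (fun j => (eLpNorm (u j) 2 (volume.restrict Ω)).toReal) atTop atTop)
    (hconv : Tendsto (fun j =>
        (eLpNorm (fun x => u j x / (eLpNorm (u j) 2 (volume.restrict Ω)).toReal - φ₀ x)
          2 (volume.restrict Ω)).toReal) atTop (nhds 0)) :
    Tendsto (fun j =>
        ((∫ x, G (u j x) ∂(volume.restrict Ω)) -
          ∫ x, fbar x * u j x ∂(volume.restrict Ω)) /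
          (eLpNorm (u j) 2 (volume.restrict Ω)).toReal)
      atTop
      (nhds ((∫ x, (gp - fbar x) * max (φ₀ x) 0 ∂(volume.restrict Ω)) -
        ∫ x, (gm - fbar x) * max (-(φ₀ x)) 0 ∂(volume.restrict Ω))) := by
  obtain ⟨M, hM⟩ := hgb
  obtain rfl : G = fun s => ∫ τ in (0 : ℝ)..s, g τ := funext hG
  have : IsFiniteMeasure (volume.restrict Ω) :=
    isFiniteMeasure_restrict.2 hΩb.measure_lt_top.ne
  set μ := volume.restrict Ω
  set t := fun j => (eLpNorm (u j) 2 μ).toReal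
  have hv : ∀ j, MemLp (fun x => u j x / t j) 2 μ := fun j => by
    simpa only [div_eq_mul_inv] using (hu j).mul_const (t j)⁻¹
  have hnonlin := tendsto_integral_comp_div
    (lipschitzWith_intervalIntegral hgc fun s => (hM s).trans (Real.le_coe_toNNReal M))
    intervalIntegral.integral_same (tendsto_intervalIntegral_mul_div_atTop hgc hgp hgm)
    (fun j => (hu j).integrable one_le_two) (hφ₀.integrable one_le_two) hnorm
    (tendsto_integral_abs_of_tendsto_eLpNorm (w := fun j x => u j x / t j - φ₀ x)
      (fun j => (hv j).sub hφ₀) hconv)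
  have hlin := tendsto_integral_mul_of_tendsto_eLpNorm_sub hfbar hv hφ₀ hconv
  rw [integral_sub_mul_max_sub_integral_sub_mul_max hfbar hφ₀]
  refine (hnonlin.sub hlin).congr fun j => ?_
  simp only [t, sub_div, ← MeasureTheory.integral_div, mul_div_assoc]

/-- Key computation: if `g` is bounded continuous with limits `g(±∞)`, `Ω` is a bounded
domain, `‖uₙ‖₂ → ∞` and `uₙ/‖uₙ‖₂ → φ₀` in `L²(Ω)`, then
`(∫ G(uₙ) − ∫ f̄·uₙ)/‖uₙ‖₂ → ∫ (g(+∞) − f̄)·φ₀⁺ − ∫ (g(−∞) − f̄)·φ₀⁻`. -/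
theorem stmt_10
    {n : ℕ} (Ω : Set (EuclideanSpace ℝ (Fin n)))
    (hΩb : Bornology.IsBounded Ω) (hΩm : MeasurableSet Ω)
    (g : ℝ → ℝ) (hgc : Continuous g) (hgb : ∃ M : ℝ, ∀ s : ℝ, |g s| ≤ M)
    (gp gm : ℝ) (hgp : Tendsto g atTop (nhds gp)) (hgm : Tendsto g atBot (nhds gm))
    (G : ℝ → ℝ) (hG : ∀ s : ℝ, G s = ∫ τ in (0 : ℝ)..s, g τ)
    (fbar : EuclideanSpace ℝ (Fin n) → ℝ) (hfbar : MemLp fbar 2 (volume.restrict Ω))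
    (φ₀ : EuclideanSpace ℝ (Fin n) → ℝ) (hφ₀ : MemLp φ₀ 2 (volume.restrict Ω))
    (u : ℕ → EuclideanSpace ℝ (Fin n) → ℝ)
    (hu : ∀ j, MemLp (u j) 2 (volume.restrict Ω))
    (hnorm : Tendsto (fun j => (eLpNorm (u j) 2 (volume.restrict Ω)).toReal) atTop atTop)
    (hconv : Tendsto (fun j =>
        (eLpNorm (fun x => u j x / (eLpNorm (u j) 2 (volume.restrict Ω)).toReal - φ₀ x)
          2 (volume.restrict Ω)).toReal) atTop (nhds 0)) :
    Tendsto (fun j =>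
        ((∫ x, G (u j x) ∂(volume.restrict Ω)) -
          ∫ x, fbar x * u j x ∂(volume.restrict Ω)) /
          (eLpNorm (u j) 2 (volume.restrict Ω)).toReal)
      atTop
      (nhds ((∫ x, (gp - fbar x) * max (φ₀ x) 0 ∂(volume.restrict Ω)) -
        ∫ x, (gm - fbar x) * max (-(φ₀ x)) 0 ∂(volume.restrict Ω))) :=
  stmt_10_general Ω hΩb g hgc hgb gp gm hgp hgm G hG fbar hfbar φ₀ hφ₀ u hu hnorm hconv
end

section
/- Let h : ℝ → ℝ be continuous with h(s) → L⁺ as s → +∞ and h(s) → L⁻ as s → −∞, and assume |h(s)| ≤ C for all s. Let Ω have finite measure, (uₙ) ⊂ L²(Ω), ‖uₙ‖₂ → ∞, uₙ/‖uₙ‖₂ → φ in L²(Ω). Then ∫_Ω h(uₙ)·uₙ/‖uₙ‖₂ dx → ∫_{φ>0} L⁺·φ dx + ∫_{φ<0} L⁻·φ dx. -/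
open Filter MeasureTheory
open scoped ENNReal

theorem aux_main
    {α : Type*} [MeasurableSpace α] (μ : Measure α) [IsFiniteMeasure μ]
    (h : ℝ → ℝ) (hhc : Continuous h) (C : ℝ) (hhb : ∀ s : ℝ, |h s| ≤ C)
    (Lp Lm : ℝ) (hLp : Tendsto h atTop (nhds Lp)) (hLm : Tendsto h atBot (nhds Lm))
    (φ' : α → ℝ) (hm : StronglyMeasurable φ') (hφ' : MemLp φ' 2 μ)
    (hφ'1 : Integrable φ' μ)
    (u : ℕ → α → ℝ) (hu : ∀ j, MemLp (u j) 2 μ)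
    (N : ℕ → ℝ) (hN : ∀ j, N j = (eLpNorm (u j) 2 μ).toReal)
    (v : ℕ → α → ℝ) (hv : ∀ j x, v j x = u j x / N j)
    (hvmem : ∀ j, MemLp (v j) 2 μ)
    (hnorm : Tendsto N atTop atTop)
    (hE2 : Tendsto (fun j => eLpNorm (fun x => v j x - φ' x) 2 μ) atTop (nhds 0))
    (g : α → ℝ)
    (hg : ∀ x, g x = if 0 < φ' x then Lp * φ' x else if φ' x < 0 then Lm * φ' x else 0) :
    Tendsto (fun j => ∫ x, h (u j x) * φ' x ∂μ) atTop (nhds (∫ x, g x ∂μ)) := by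
  refine tendsto_of_subseq_tendsto fun ns hns => ?_
  have h2 : Tendsto (fun n => eLpNorm ((fun m => v (ns m)) n - φ') 2 μ) atTop (nhds 0) := by
    have := hE2.comp hns
    refine this.congr fun n => ?_
    rfl
  have htim : TendstoInMeasure μ (fun m => v (ns m)) atTop φ' :=
    tendstoInMeasure_of_tendsto_eLpNorm (by norm_num)
      (fun n => (hvmem (ns n)).aestronglyMeasurable) hφ'.aestronglyMeasurable h2
  obtain ⟨ms, hms_mono, haeconv⟩ := htim.exists_seq_tendsto_ae
  refine ⟨ms, ?_⟩
  have hNt : Tendsto (fun k => N (ns (ms k))) atTop atTop :=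
    hnorm.comp (hns.comp hms_mono.tendsto_atTop)
  refine tendsto_integral_of_dominated_convergence (fun x => C * |φ' x|)
    (fun k => (hhc.comp_aestronglyMeasurable (hu (ns (ms k))).aestronglyMeasurable).mul
      hm.aestronglyMeasurable) (hφ'1.abs.const_mul C) (fun k => ?_) ?_
  · refine Eventually.of_forall fun x => ?_
    simp only [norm_mul, Real.norm_eq_abs]
    exact mul_le_mul_of_nonneg_right (hhb _) (abs_nonneg _)
  · refine haeconv.mono fun x hx => ?_
    -- hx : Tendsto (fun i => v (ns (ms i)) x) atTop (nhds (φ' x))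
    have hueq : ∀ᶠ k in atTop, u (ns (ms k)) x = v (ns (ms k)) x * N (ns (ms k)) := by
      filter_upwards [hNt.eventually_gt_atTop 0] with k hk
      rw [hv]
      field_simp
    rcases lt_trichotomy 0 (φ' x) with hpos | hzero | hneg
    · have hut : Tendsto (fun k => u (ns (ms k)) x) atTop atTop :=
        Tendsto.congr' (hueq.mono fun k hk => hk.symm) (hx.pos_mul_atTop hpos hNt)
      have : Tendsto (fun k => h (u (ns (ms k)) x) * φ' x) atTop (nhds (Lp * φ' x)) :=
        (hLp.comp hut).mul_const _
      simpa [hg x, if_pos hpos] using this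
    · have : (fun k => h (u (ns (ms k)) x) * φ' x) = fun _ => 0 := by
        funext k; rw [← hzero, mul_zero]
      rw [this, hg x, if_neg (by rw [← hzero]; exact lt_irrefl 0), if_neg (by rw [← hzero]; exact lt_irrefl 0)]
      exact tendsto_const_nhds
    · have hut : Tendsto (fun k => u (ns (ms k)) x) atTop atBot :=
        Tendsto.congr' (hueq.mono fun k hk => hk.symm) (hx.neg_mul_atTop hneg hNt)
      have : Tendsto (fun k => h (u (ns (ms k)) x) * φ' x) atTop (nhds (Lm * φ' x)) :=
        (hLm.comp hut).mul_const _
      simpa [hg x, if_neg (not_lt.mpr hneg.le), if_pos hneg] using this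


theorem aux_split {α : Type*} [MeasurableSpace α] (μ : Measure α) [IsFiniteMeasure μ]
    (Lp Lm : ℝ) (φ φ' : α → ℝ) (hm : StronglyMeasurable φ') (hφ'1 : Integrable φ' μ)
    (hae : φ =ᵐ[μ] φ') :
    ∫ x, (if 0 < φ' x then Lp * φ' x else if φ' x < 0 then Lm * φ' x else 0) ∂μ
      = (∫ x in {x | φ x > 0}, Lp * φ x ∂μ) + ∫ x in {x | φ x < 0}, Lm * φ x ∂μ := by
  have hs1 : MeasurableSet {x | 0 < φ' x} := measurableSet_lt measurable_const hm.measurable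
  have hs2 : MeasurableSet {x | φ' x < 0} := measurableSet_lt hm.measurable measurable_const
  have hgeq : (fun x => if 0 < φ' x then Lp * φ' x else if φ' x < 0 then Lm * φ' x else 0)
      = fun x => Set.indicator {x | 0 < φ' x} (fun x => Lp * φ' x) x
        + Set.indicator {x | φ' x < 0} (fun x => Lm * φ' x) x := by
    funext x
    rcases lt_trichotomy 0 (φ' x) with hpos | hzero | hneg
    · simp [Set.indicator_of_mem, Set.indicator_of_notMem, hpos, not_lt.mpr hpos.le,
        Set.mem_setOf_eq, asymm hpos]
    · simp [Set.mem_setOf_eq, ← hzero]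
    · simp [Set.mem_setOf_eq, hneg, not_lt.mpr hneg.le, asymm hneg]
  rw [hgeq, integral_add ((hφ'1.const_mul Lp).indicator hs1) ((hφ'1.const_mul Lm).indicator hs2),
    integral_indicator hs1, integral_indicator hs2]
  have hseq1 : {x | φ x > 0} =ᵐ[μ] {x | 0 < φ' x} := by
    filter_upwards [hae] with x hx
    change (0 < φ x) = (0 < φ' x)
    rw [hx]
  have hseq2 : {x | φ x < 0} =ᵐ[μ] {x | φ' x < 0} := by
    filter_upwards [hae] with x hx
    change (φ x < 0) = (φ' x < 0)
    rw [hx]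
  have hfe1 : (fun x => Lp * φ x) =ᵐ[μ] fun x => Lp * φ' x := by
    filter_upwards [hae] with x hx; rw [hx]
  have hfe2 : (fun x => Lm * φ x) =ᵐ[μ] fun x => Lm * φ' x := by
    filter_upwards [hae] with x hx; rw [hx]
  have e1 : ∫ x in {x | φ x > 0}, Lp * φ x ∂μ = ∫ x in {x | 0 < φ' x}, Lp * φ' x ∂μ := by
    rw [setIntegral_congr_set hseq1]
    exact integral_congr_ae (ae_restrict_of_ae hfe1)
  have e2 : ∫ x in {x | φ x < 0}, Lm * φ x ∂μ = ∫ x in {x | φ' x < 0}, Lm * φ' x ∂μ := by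
    rw [setIntegral_congr_set hseq2]
    exact integral_congr_ae (ae_restrict_of_ae hfe2)
  rw [e1, e2]

/-- Core convergence lemma: `h` bounded continuous with limits `L±` at `±∞`, `Ω` of finite
measure, `‖uₙ‖₂ → ∞` and `uₙ/‖uₙ‖₂ → φ` in `L²`; then
`∫ h(uₙ)·uₙ/‖uₙ‖₂ → ∫_{φ>0} L⁺·φ + ∫_{φ<0} L⁻·φ`. -/

theorem stmt_18
    {α : Type*} [MeasurableSpace α] (μ : Measure α) [IsFiniteMeasure μ]
    (h : ℝ → ℝ) (hhc : Continuous h) (C : ℝ) (hhb : ∀ s : ℝ, |h s| ≤ C)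
    (Lp Lm : ℝ) (hLp : Tendsto h atTop (nhds Lp)) (hLm : Tendsto h atBot (nhds Lm))
    (φ : α → ℝ) (hφ : MemLp φ 2 μ)
    (u : ℕ → α → ℝ) (hu : ∀ j, MemLp (u j) 2 μ)
    (hnorm : Tendsto (fun j => (eLpNorm (u j) 2 μ).toReal) atTop atTop)
    (hconv : Tendsto (fun j =>
        (eLpNorm (fun x => u j x / (eLpNorm (u j) 2 μ).toReal - φ x) 2 μ).toReal)
      atTop (nhds 0)) :
    Tendsto (fun j => ∫ x, h (u j x) * (u j x / (eLpNorm (u j) 2 μ).toReal) ∂μ)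
      atTop
      (nhds ((∫ x in {x | φ x > 0}, Lp * φ x ∂μ) + ∫ x in {x | φ x < 0}, Lm * φ x ∂μ)) := by
  have hC0 : 0 ≤ C := le_trans (abs_nonneg _) (hhb 0)
  set N : ℕ → ℝ := fun j => (eLpNorm (u j) 2 μ).toReal with hN
  set v : ℕ → α → ℝ := fun j x => u j x / N j with hv
  -- measurable representative of φ
  set φ' : α → ℝ := hφ.1.mk φ with hφ'def
  have hm : StronglyMeasurable φ' := hφ.1.stronglyMeasurable_mk
  have hae : φ =ᵐ[μ] φ' := hφ.1.ae_eq_mk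
  have hφ' : MemLp φ' 2 μ := hφ.ae_eq hae
  have hφ'1 : Integrable φ' μ :=
    memLp_one_iff_integrable.mp (hφ'.mono_exponent one_le_two)
  have hvmem : ∀ j, MemLp (v j) 2 μ := by
    intro j
    simpa [hv, div_eq_inv_mul] using (hu j).const_mul (N j)⁻¹
  have hdmem : ∀ j, MemLp (fun x => v j x - φ' x) 2 μ := fun j => (hvmem j).sub hφ'
  have hd1 : ∀ j, Integrable (fun x => v j x - φ' x) μ := fun j =>
    memLp_one_iff_integrable.mp ((hdmem j).mono_exponent one_le_two)
  -- convergence with φ'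
  have hconv' : Tendsto (fun j => (eLpNorm (fun x => v j x - φ' x) 2 μ).toReal)
      atTop (nhds 0) := by
    refine hconv.congr fun j => ?_
    refine congrArg ENNReal.toReal (eLpNorm_congr_ae ?_)
    exact hae.mono fun x hx => by simp [hv, hN, hx]
  have hE2 : Tendsto (fun j => eLpNorm (fun x => v j x - φ' x) 2 μ) atTop (nhds 0) := by
    have := ENNReal.tendsto_ofReal hconv'
    rw [ENNReal.ofReal_zero] at this
    refine this.congr fun j => ?_
    exact ENNReal.ofReal_toReal (hdmem j).eLpNorm_ne_top
  -- integrability of the integrands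
  have hhum : ∀ j, AEStronglyMeasurable (fun x => h (u j x)) μ :=
    fun j => hhc.comp_aestronglyMeasurable (hu j).aestronglyMeasurable
  have hbdd : ∀ j, ∃ c, ∀ x, ‖h (u j x)‖ ≤ c := fun j => ⟨C, fun x => hhb _⟩
  have hI1 : ∀ j, Integrable (fun x => h (u j x) * φ' x) μ := fun j =>
    Integrable.bdd_mul hφ'1 (hhum j) (Eventually.of_forall (hbdd j).choose_spec)
  have hI2 : ∀ j, Integrable (fun x => h (u j x) * (v j x - φ' x)) μ := fun j =>
    Integrable.bdd_mul (hd1 j) (hhum j) (Eventually.of_forall (hbdd j).choose_spec)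
  -- Step 1: error term tends to 0
  have herr : Tendsto (fun j => ∫ x, h (u j x) * (v j x - φ' x) ∂μ) atTop (nhds 0) := by
    have hK : (μ Set.univ ^ ((1:ℝ)/(1:ℝ≥0∞).toReal - 1/(2:ℝ≥0∞).toReal)) ≠ ∞ := by
      refine ENNReal.rpow_ne_top_of_nonneg ?_ (measure_ne_top μ _)
      norm_num
    set K : ℝ := (μ Set.univ ^ ((1:ℝ)/(1:ℝ≥0∞).toReal - 1/(2:ℝ≥0∞).toReal)).toReal with hKdef
    have hbound : ∀ j, |∫ x, h (u j x) * (v j x - φ' x) ∂μ| ≤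
        C * K * (eLpNorm (fun x => v j x - φ' x) 2 μ).toReal := by
      intro j
      calc |∫ x, h (u j x) * (v j x - φ' x) ∂μ|
          ≤ ∫ x, ‖h (u j x) * (v j x - φ' x)‖ ∂μ := by
            simpa [Real.norm_eq_abs] using norm_integral_le_integral_norm
              (fun x => h (u j x) * (v j x - φ' x)) (μ := μ)
        _ ≤ ∫ x, C * ‖v j x - φ' x‖ ∂μ := by
            refine integral_mono (hI2 j).norm ((hd1 j).norm.const_mul C) fun x => ?_
            simp only [norm_mul, Real.norm_eq_abs]
            exact mul_le_mul_of_nonneg_right (hhb _) (abs_nonneg _)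
        _ = C * (eLpNorm (fun x => v j x - φ' x) 1 μ).toReal := by
            rw [integral_const_mul, integral_norm_eq_lintegral_enorm (hd1 j).aestronglyMeasurable,
              eLpNorm_one_eq_lintegral_enorm]
        _ ≤ C * (K * (eLpNorm (fun x => v j x - φ' x) 2 μ).toReal) := by
            refine mul_le_mul_of_nonneg_left ?_ hC0
            have hle := eLpNorm_le_eLpNorm_mul_rpow_measure_univ (μ := μ)
              (p := 1) (q := 2) one_le_two (hd1 j).aestronglyMeasurable
            have := ENNReal.toReal_mono (by
                exact ENNReal.mul_ne_top (hdmem j).eLpNorm_ne_top hK) hle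
            rw [ENNReal.toReal_mul] at this
            calc (eLpNorm (fun x => v j x - φ' x) 1 μ).toReal
                ≤ (eLpNorm (fun x => v j x - φ' x) 2 μ).toReal * K := this
              _ = K * (eLpNorm (fun x => v j x - φ' x) 2 μ).toReal := mul_comm _ _
        _ = C * K * (eLpNorm (fun x => v j x - φ' x) 2 μ).toReal := by ring
    have hsq : Tendsto (fun j => C * K * (eLpNorm (fun x => v j x - φ' x) 2 μ).toReal)
        atTop (nhds 0) := by
      simpa using hconv'.const_mul (C * K)
    refine squeeze_zero_norm (fun j => ?_) hsq
    simpa [Real.norm_eq_abs] using hbound j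
  -- Step 2: main term
  set g : α → ℝ := fun x => if 0 < φ' x then Lp * φ' x else if φ' x < 0 then Lm * φ' x else 0
    with hgdef
  have hmain : Tendsto (fun j => ∫ x, h (u j x) * φ' x ∂μ) atTop (nhds (∫ x, g x ∂μ)) :=
    aux_main μ h hhc C hhb Lp Lm hLp hLm φ' hm hφ' hφ'1 u hu N (fun j => rfl)
      v (fun j x => rfl) hvmem hnorm hE2 g (fun x => rfl)
  -- splitting the integral
  have hsplit : ∀ j, ∫ x, h (u j x) * (u j x / (eLpNorm (u j) 2 μ).toReal) ∂μ
      = (∫ x, h (u j x) * φ' x ∂μ) + ∫ x, h (u j x) * (v j x - φ' x) ∂μ := by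
    intro j
    rw [← integral_add (hI1 j) (hI2 j)]
    refine integral_congr_ae (Eventually.of_forall fun x => ?_)
    show h (u j x) * (u j x / (eLpNorm (u j) 2 μ).toReal)
        = h (u j x) * φ' x + h (u j x) * (v j x - φ' x)
    rw [show u j x / (eLpNorm (u j) 2 μ).toReal = v j x from rfl]
    ring
  have hfull : Tendsto (fun j => ∫ x, h (u j x) * (u j x / (eLpNorm (u j) 2 μ).toReal) ∂μ)
      atTop (nhds (∫ x, g x ∂μ)) := by
    have := hmain.add herr
    rw [add_zero] at this
    exact this.congr fun j => (hsplit j).symm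
  have hTeq : ∫ x, g x ∂μ
      = (∫ x in {x | φ x > 0}, Lp * φ x ∂μ) + ∫ x in {x | φ x < 0}, Lm * φ x ∂μ :=
    aux_split μ Lp Lm φ φ' hm hφ'1 hae
  rw [← hTeq]
  exact hfull
end
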